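/- Let n ≥ 5 be an integer and let G be a nontrivial connected spanning convex subgraph of the square cycle C_n^2. Then there exist integers j, k with 0 ≤ j ≤ n-1 and 0 ≤ k ≤ ⌈(n-2)/2⌉ such that G = S_{n,k,j}. -/
import Mathlib


open SimpleGraph

/-- The square cycle `C_n^2`: vertices `ZMod n`, with `u ~ v` iff `u - v ≡ ±1, ±2 (mod n)`. -/
def squareCycle (n : ℕ) : SimpleGraph (ZMod n) :=
  SimpleGraph.fromRel (fun u v => u - v = 1 ∨ u - v = 2)

/-- The frame `e_i = {v_i, v_{i+1}}`. -/
def frame (n : ℕ) (i : ℤ) : Sym2 (ZMod n) := s(((i : ZMod n)), (((i + 1 : ℤ) : ZMod n)))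

/-- The window `f_i = {v_i, v_{i+2}}`. -/
def window (n : ℕ) (i : ℤ) : Sym2 (ZMod n) := s(((i : ZMod n)), (((i + 2 : ℤ) : ZMod n)))

/-- The triangle `T_i = {e_i, e_{i+1}, f_i}`. -/
def triangle (n : ℕ) (i : ℤ) : Set (Sym2 (ZMod n)) :=
  {frame n i, frame n (i + 1), window n i}

/-- A subgraph of `C_n^2` is convex if for every triangle `T_i`, either at most one of its
edges is in `G` or all three of them are. -/
def IsConvex (n : ℕ) (G : SimpleGraph (ZMod n)) : Prop :=
  ∀ i : ℤ, (triangle n i ∩ G.edgeSet).ncard ≤ 1 ∨ triangle n i ⊆ G.edgeSet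

/-- The escape route `ES(n,k,j) = {f_j, f_{j+2k+1}} ∪ {e_{j+1}, …, e_{j+2k+1}}`. -/
def escapeRoute (n : ℕ) (k j : ℤ) : Set (Sym2 (ZMod n)) :=
  {window n j, window n (j + 2 * k + 1)} ∪
    frame n '' {i : ℤ | j + 1 ≤ i ∧ i ≤ j + 2 * k + 1}

/-- The strip graph with tails `S_{n,k,j}`, obtained from `C_n^2` by deleting the
escape route `ES(n,k,j)`. -/
def stripTails (n : ℕ) (k j : ℤ) : SimpleGraph (ZMod n) :=
  (squareCycle n).deleteEdges (escapeRoute n k j)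

/-- A connected spanning subgraph of `C_n^2` is trivial if it is `C_n^2` itself or
(for odd `n`) the subgraph whose edges are all the windows. -/
def IsTrivialSub (n : ℕ) (G : SimpleGraph (ZMod n)) : Prop :=
  G = squareCycle n ∨ (Odd n ∧ G.edgeSet = Set.range (window n))

/-- The number of spanning trees of `G`, i.e. of subgraphs `H ≤ G` (on the same vertex
set) which are trees. -/
noncomputable def numSpanningTrees {V : Type*} (G : SimpleGraph V) : ℕ :=
  Nat.card {H : SimpleGraph V // H ≤ G ∧ H.IsTree}

/-- The strip graph `S_m`: vertices `1, …, m` (here `Fin m`), with `i ~ j` iff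
`1 ≤ |i - j| ≤ 2`. -/
def strip (m : ℕ) : SimpleGraph (Fin m) :=
  SimpleGraph.fromRel (fun i j => (j : ℤ) = (i : ℤ) + 1 ∨ (j : ℤ) = (i : ℤ) + 2)

set_option linter.unusedSectionVars false
set_option maxHeartbeats 1000000

section Helpers
variable {n : ℕ} (hn : 5 ≤ n)

lemma dvd_small {d : ℤ} (hd : (n:ℤ) ∣ d) (h1 : -n < d) (h2 : d < n) : d = 0 := by
  rcases hd with ⟨c, rfl⟩
  rcases lt_trichotomy c 0 with h | h | h
  · nlinarith [Int.le_of_lt h]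
  · simp [h]
  · nlinarith [Int.lt_iff_add_one_le.mp h]

lemma dvd_flip {m a b : ℤ} (h : m ∣ a - b) : m ∣ b - a := by
  rw [← neg_sub]; exact dvd_neg.mpr h

lemma cast_eq_iff {a b : ℤ} : ((a : ZMod n) = b) ↔ (n:ℤ) ∣ b - a := by
  rw [ZMod.intCast_eq_intCast_iff, Int.modEq_iff_dvd]

lemma cast_eq_of_dvd {a b : ℤ} (h : (n:ℤ) ∣ a - b) : ((a : ZMod n) = b) :=
  cast_eq_iff.mpr (dvd_flip h)

lemma frame_congr {i i' : ℤ} (h : (n:ℤ) ∣ i - i') : frame n i = frame n i' := by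
  unfold frame
  rw [cast_eq_of_dvd h, cast_eq_of_dvd (show (n:ℤ) ∣ (i+1) - (i'+1) by simpa using h)]

lemma window_congr {i i' : ℤ} (h : (n:ℤ) ∣ i - i') : window n i = window n i' := by
  unfold window
  rw [cast_eq_of_dvd h, cast_eq_of_dvd (show (n:ℤ) ∣ (i+2) - (i'+2) by simpa using h)]

include hn in
lemma not_dvd_small {d : ℤ} (h1 : 0 < d) (h2 : d < n) : ¬ (n:ℤ) ∣ d := by
  intro h; have := dvd_small h (by omega) h2; omega

include hn in
lemma frame_eq_frame_iff {i i' : ℤ} : frame n i = frame n i' ↔ (n:ℤ) ∣ i - i' := by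
  constructor
  · intro h
    unfold frame at h
    rw [Sym2.eq_iff] at h
    rcases h with ⟨h1, _⟩ | ⟨h1, h2⟩
    · exact dvd_flip (cast_eq_iff.mp h1)
    · exfalso
      have k1 := cast_eq_iff.mp h1
      have k2 := cast_eq_iff.mp h2
      have : (n:ℤ) ∣ 2 := by
        have := Int.dvd_sub k1 k2
        rwa [show (i' + 1 - i) - (i' - (i+1)) = 2 by ring] at this
      have := Int.le_of_dvd (by norm_num) this; omega
  · intro h; exact frame_congr h

include hn in
lemma window_eq_window_iff {i i' : ℤ} : window n i = window n i' ↔ (n:ℤ) ∣ i - i' := by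
  constructor
  · intro h
    unfold window at h
    rw [Sym2.eq_iff] at h
    rcases h with ⟨h1, _⟩ | ⟨h1, h2⟩
    · exact dvd_flip (cast_eq_iff.mp h1)
    · exfalso
      have k1 := cast_eq_iff.mp h1
      have k2 := cast_eq_iff.mp h2
      have : (n:ℤ) ∣ 4 := by
        have := Int.dvd_sub k1 k2
        rwa [show (i' + 2 - i) - (i' - (i+2)) = 4 by ring] at this
      have := Int.le_of_dvd (by norm_num) this; omega
  · intro h; exact window_congr h

include hn in
lemma frame_ne_window {i i' : ℤ} : frame n i ≠ window n i' := by
  intro h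
  unfold frame window at h
  rw [Sym2.eq_iff] at h
  rcases h with ⟨h1, h2⟩ | ⟨h1, h2⟩
  · have k1 := cast_eq_iff.mp h1
    have k2 := cast_eq_iff.mp h2
    have : (n:ℤ) ∣ 1 := by
      have := Int.dvd_sub k2 k1
      rwa [show (i' + 2 - (i+1)) - (i' - i) = 1 by ring] at this
    have := Int.le_of_dvd (by norm_num) this; omega
  · have k1 := cast_eq_iff.mp h1
    have k2 := cast_eq_iff.mp h2
    have : (n:ℤ) ∣ 3 := by
      have := Int.dvd_sub k1 k2
      rwa [show (i' + 2 - i) - (i' - (i+1)) = 3 by ring] at this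
    have := Int.le_of_dvd (by norm_num) this; omega

end Helpers

section SC
variable {n : ℕ} (hn : 5 ≤ n)

lemma sc_adj {x y : ZMod n} :
    (squareCycle n).Adj x y ↔ x ≠ y ∧ (y = x + 1 ∨ y = x - 1 ∨ y = x + 2 ∨ y = x - 2) := by
  rw [squareCycle, fromRel_adj]
  constructor
  · rintro ⟨hne, (h | h) | (h | h)⟩
    · exact ⟨hne, Or.inr (Or.inl (by rw [← h]; ring))⟩
    · exact ⟨hne, Or.inr (Or.inr (Or.inr (by rw [← h]; ring)))⟩
    · exact ⟨hne, Or.inl (by rw [← h]; ring)⟩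
    · exact ⟨hne, Or.inr (Or.inr (Or.inl (by rw [← h]; ring)))⟩
  · rintro ⟨hne, h | h | h | h⟩
    · exact ⟨hne, Or.inr (Or.inl (by rw [h]; ring))⟩
    · exact ⟨hne, Or.inl (Or.inl (by rw [h]; ring))⟩
    · exact ⟨hne, Or.inr (Or.inr (by rw [h]; ring))⟩
    · exact ⟨hne, Or.inl (Or.inr (by rw [h]; ring))⟩

lemma edge_form_add_one {x : ZMod n} {i : ℤ} (hx : x = (i : ZMod n)) :
    s(x, x + 1) = frame n i := by
  subst hx; unfold frame; push_cast; rfl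

lemma edge_form_sub_one {x : ZMod n} {i : ℤ} (hx : x = (i : ZMod n)) :
    s(x, x - 1) = frame n (i - 1) := by
  subst hx; unfold frame; rw [Sym2.eq_swap]; push_cast; ring_nf

lemma edge_form_add_two {x : ZMod n} {i : ℤ} (hx : x = (i : ZMod n)) :
    s(x, x + 2) = window n i := by
  subst hx; unfold window; push_cast; rfl

lemma edge_form_sub_two {x : ZMod n} {i : ℤ} (hx : x = (i : ZMod n)) :
    s(x, x - 2) = window n (i - 2) := by
  subst hx; unfold window; rw [Sym2.eq_swap]; push_cast; ring_nf

include hn in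
lemma exists_int_rep (x : ZMod n) (j : ℤ) :
    ∃ s : ℤ, 0 ≤ s ∧ s ≤ n - 1 ∧ x = ((j + s : ℤ) : ZMod n) := by
  haveI : NeZero n := ⟨by omega⟩
  refine ⟨((x - (j : ZMod n)).val : ℤ), by positivity, ?_, ?_⟩
  · have := ZMod.val_lt (x - (j : ZMod n)); omega
  · push_cast
    rw [ZMod.natCast_val, ZMod.cast_id]
    ring

-- triangle finiteness
lemma triangle_finite (i : ℤ) : (triangle n i).Finite := by
  unfold triangle
  exact (Set.finite_singleton _).insert _ |>.insert _

section Conv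
variable {G : SimpleGraph (ZMod n)} (hconv : IsConvex n G)

include hn hconv in
lemma conv_all {i : ℤ} (e1 e2 : Sym2 (ZMod n)) (he1 : e1 ∈ triangle n i)
    (he2 : e2 ∈ triangle n i) (hne : e1 ≠ e2)
    (h1 : e1 ∈ G.edgeSet) (h2 : e2 ∈ G.edgeSet) : triangle n i ⊆ G.edgeSet := by
  rcases hconv i with h | h
  · exfalso
    have hsub : ({e1, e2} : Set _) ⊆ triangle n i ∩ G.edgeSet := by
      rintro e (rfl | rfl)
      · exact ⟨he1, h1⟩
      · exact ⟨he2, h2⟩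
    have hfin : (triangle n i ∩ G.edgeSet).Finite := (triangle_finite i).inter_of_left _
    have := Set.ncard_le_ncard hsub hfin
    rw [Set.ncard_pair hne] at this
    omega
  · exact h

include hn hconv in
lemma conv1 {i : ℤ} (h1 : frame n i ∈ G.edgeSet) (h2 : frame n (i+1) ∈ G.edgeSet) :
    window n i ∈ G.edgeSet := by
  have hne : frame n i ≠ frame n (i+1) := fun h => by
    have hd := (frame_eq_frame_iff hn).mp h
    rw [show i - (i+1) = -(1:ℤ) by ring, dvd_neg] at hd
    exact not_dvd_small hn (d := 1) (by omega) (by omega) hd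
  exact conv_all hn hconv _ _ (by left; rfl) (by right; left; rfl) hne h1 h2
    (by right; right; rfl)

include hn hconv in
lemma conv2 {i : ℤ} (h1 : frame n i ∈ G.edgeSet) (h2 : window n i ∈ G.edgeSet) :
    frame n (i+1) ∈ G.edgeSet := by
  exact conv_all hn hconv _ _ (by left; rfl) (by right; right; rfl)
    (frame_ne_window hn) h1 h2 (by right; left; rfl)

include hn hconv in
lemma conv3 {i : ℤ} (h1 : frame n (i+1) ∈ G.edgeSet) (h2 : window n i ∈ G.edgeSet) :
    frame n i ∈ G.edgeSet := by
  exact conv_all hn hconv _ _ (by right; left; rfl) (by right; right; rfl)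
    (frame_ne_window hn) h1 h2 (by left; rfl)

end Conv

lemma exists_crossing {V : Type*} {G : SimpleGraph V} {S : Set V} :
    ∀ {u v : V}, G.Walk u v → u ∈ S → v ∉ S → ∃ x y, x ∈ S ∧ y ∉ S ∧ G.Adj x y := by
  intro u v p
  induction p with
  | nil => intro h h'; exact absurd h h'
  | @cons u a v hadj p ih =>
    intro hu hv
    by_cases ha : a ∈ S
    · exact ih ha hv
    · exact ⟨u, a, hu, ha, hadj⟩

include hn in
lemma cut_master {G : SimpleGraph (ZMod n)} (hle : G ≤ squareCycle n) (hconn : G.Connected)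
    (T : Set ℤ) (j : ℤ) (s₀ : ℤ) (hs₀ : s₀ ∈ T)
    (t₀ : ℤ) (ht₀ : ∀ s ∈ T, ¬ (n:ℤ) ∣ (t₀ - s))
    (h1 : ∀ s ∈ T, frame n (j+s) ∈ G.edgeSet → ∃ s' ∈ T, (n:ℤ) ∣ (s + 1) - s')
    (h2 : ∀ s ∈ T, frame n (j+s-1) ∈ G.edgeSet → ∃ s' ∈ T, (n:ℤ) ∣ (s - 1) - s')
    (h3 : ∀ s ∈ T, window n (j+s) ∈ G.edgeSet → ∃ s' ∈ T, (n:ℤ) ∣ (s + 2) - s')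
    (h4 : ∀ s ∈ T, window n (j+s-2) ∈ G.edgeSet → ∃ s' ∈ T, (n:ℤ) ∣ (s - 2) - s') :
    False := by
  set S : Set (ZMod n) := {x | ∃ s ∈ T, x = ((j + s : ℤ) : ZMod n)} with hS
  have hx₀ : (((j + s₀ : ℤ) : ZMod n)) ∈ S := ⟨s₀, hs₀, rfl⟩
  have hy₀ : (((j + t₀ : ℤ) : ZMod n)) ∉ S := by
    rintro ⟨s, hs, heq⟩
    have := cast_eq_iff.mp heq.symm
    exact ht₀ s hs (by rwa [show (j + t₀) - (j + s) = t₀ - s by ring] at this)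
  obtain ⟨p⟩ := hconn.preconnected _ _
  obtain ⟨x, y, hxS, hyS, hadj⟩ := exists_crossing p hx₀ hy₀
  obtain ⟨s, hsT, hx⟩ := hxS
  have hedge : s(x, y) ∈ G.edgeSet := G.mem_edgeSet.mpr hadj
  have hsc := hle hadj
  rw [sc_adj] at hsc
  have memS : ∀ t t' : ℤ, t' ∈ T → (n:ℤ) ∣ t - t' → (((j + t : ℤ) : ZMod n)) ∈ S := by
    intro t t' ht' hdvd
    exact ⟨t', ht', cast_eq_of_dvd (by
      rw [show (j + t) - (j + t') = t - t' by ring]; exact hdvd)⟩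
  rcases hsc.2 with h | h | h | h
  · -- y = x + 1
    rw [h, edge_form_add_one hx] at hedge
    obtain ⟨s', hs', hdvd⟩ := h1 s hsT hedge
    refine hyS ?_
    rw [h]
    have : x + 1 = ((j + (s+1) : ℤ) : ZMod n) := by rw [hx]; push_cast; ring
    rw [this]; exact memS _ _ hs' hdvd
  · -- y = x - 1
    rw [h, edge_form_sub_one hx] at hedge
    rw [show (j + s) - 1 = j + s - 1 by ring] at hedge
    obtain ⟨s', hs', hdvd⟩ := h2 s hsT hedge
    refine hyS ?_
    rw [h]
    have : x - 1 = ((j + (s-1) : ℤ) : ZMod n) := by rw [hx]; push_cast; ring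
    rw [this]; exact memS _ _ hs' hdvd
  · -- y = x + 2
    rw [h, edge_form_add_two hx] at hedge
    obtain ⟨s', hs', hdvd⟩ := h3 s hsT hedge
    refine hyS ?_
    rw [h]
    have : x + 2 = ((j + (s+2) : ℤ) : ZMod n) := by rw [hx]; push_cast; ring
    rw [this]; exact memS _ _ hs' hdvd
  · -- y = x - 2
    rw [h, edge_form_sub_two hx] at hedge
    rw [show (j + s) - 2 = j + s - 2 by ring] at hedge
    obtain ⟨s', hs', hdvd⟩ := h4 s hsT hedge
    refine hyS ?_
    rw [h]
    have : x - 2 = ((j + (s-2) : ℤ) : ZMod n) := by rw [hx]; push_cast; ring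
    rw [this]; exact memS _ _ hs' hdvd

end SC

section SC2
variable {n : ℕ} (hn : 5 ≤ n)

include hn in
lemma cast_ne_of_small {a b : ℤ} (h1 : 0 < b - a) (h2 : b - a < n) :
    ((a : ZMod n)) ≠ (b : ZMod n) := by
  intro h
  have := dvd_small (n := n) (cast_eq_iff.mp h) (by omega) h2
  omega

include hn in
lemma frame_mem_sc (i : ℤ) : frame n i ∈ (squareCycle n).edgeSet := by
  show (squareCycle n).Adj _ _
  rw [sc_adj]
  constructor
  · exact cast_ne_of_small hn (by omega) (by omega)
  · left; push_cast; ring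

include hn in
lemma window_mem_sc (i : ℤ) : window n i ∈ (squareCycle n).edgeSet := by
  show (squareCycle n).Adj _ _
  rw [sc_adj]
  constructor
  · exact cast_ne_of_small hn (by omega) (by omega)
  · right; right; left; push_cast; ring

include hn in
lemma sc_edge_classify {e : Sym2 (ZMod n)} (he : e ∈ (squareCycle n).edgeSet) :
    ∃ i : ℤ, e = frame n i ∨ e = window n i := by
  induction e with
  | _ x y =>
    have hadj : (squareCycle n).Adj x y := he
    rw [sc_adj] at hadj
    obtain ⟨s, _, _, hx⟩ := exists_int_rep hn x 0
    rcases hadj.2 with h | h | h | h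
    · exact ⟨0 + s, Or.inl (by rw [h]; exact (edge_form_add_one hx).symm ▸ rfl)⟩
    · exact ⟨0 + s - 1, Or.inl (by rw [h, edge_form_sub_one hx])⟩
    · exact ⟨0 + s, Or.inr (by rw [h, edge_form_add_two hx])⟩
    · exact ⟨0 + s - 2, Or.inr (by rw [h, edge_form_sub_two hx])⟩

include hn in
lemma frame_mem_ES {k j i : ℤ} :
    frame n i ∈ escapeRoute n k j ↔ ∃ i', (j + 1 ≤ i' ∧ i' ≤ j + 2*k + 1) ∧ (n:ℤ) ∣ i' - i := by
  unfold escapeRoute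
  simp only [Set.mem_union, Set.mem_insert_iff, Set.mem_singleton_iff, Set.mem_image,
    Set.mem_setOf_eq]
  constructor
  · rintro ((h | h) | ⟨i', ⟨ha, hb⟩, heq⟩)
    · exact absurd h (frame_ne_window hn)
    · exact absurd h (frame_ne_window hn)
    · exact ⟨i', ⟨ha, hb⟩, (frame_eq_frame_iff hn).mp heq⟩
  · rintro ⟨i', ⟨ha, hb⟩, hdvd⟩
    exact Or.inr ⟨i', ⟨ha, hb⟩, frame_congr hdvd⟩

include hn in
lemma window_mem_ES {k j i : ℤ} :
    window n i ∈ escapeRoute n k j ↔ ((n:ℤ) ∣ j - i ∨ (n:ℤ) ∣ (j + 2*k + 1) - i) := by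
  unfold escapeRoute
  simp only [Set.mem_union, Set.mem_insert_iff, Set.mem_singleton_iff, Set.mem_image,
    Set.mem_setOf_eq]
  constructor
  · rintro ((h | h) | ⟨i', _, heq⟩)
    · exact Or.inl (dvd_flip ((window_eq_window_iff hn).mp h))
    · exact Or.inr (dvd_flip ((window_eq_window_iff hn).mp h))
    · exact absurd heq (frame_ne_window hn)
  · rintro (h | h)
    · exact Or.inl (Or.inl (window_congr (by rwa [show i - j = -(j - i) by ring, dvd_neg])))
    · exact Or.inl (Or.inr (window_congr
        (by rwa [show i - (j + 2*k+1) = -((j+2*k+1) - i) by ring, dvd_neg])))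

end SC2

section Final
variable {n : ℕ} (hn : 5 ≤ n)

include hn in
lemma rep_mod (i j : ℤ) : ∃ r : ℤ, 0 ≤ r ∧ r < n ∧ (n:ℤ) ∣ (i - j) - r := by
  refine ⟨(i - j) % n, Int.emod_nonneg _ (by omega), Int.emod_lt_of_pos _ (by omega),
    ⟨(i - j) / n, by rw [Int.emod_def]; ring⟩⟩

include hn in
lemma final_eq {G : SimpleGraph (ZMod n)} (hle : G ≤ squareCycle n)
    (j m k : ℤ) (hk : m = 2*k + 1) (hm1 : 1 ≤ m) (hmn : m ≤ n)
    (hA0 : ∀ s : ℤ, 1 ≤ s → s ≤ m → frame n (j+s) ∉ G.edgeSet)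
    (hA1 : ∀ s : ℤ, m+1 ≤ s → s ≤ n → frame n (j+s) ∈ G.edgeSet)
    (hB0 : window n j ∉ G.edgeSet) (hBm : window n (j+m) ∉ G.edgeSet)
    (hB1 : ∀ s : ℤ, 1 ≤ s → s ≤ m-1 → window n (j+s) ∈ G.edgeSet)
    (hB2 : ∀ s : ℤ, m+1 ≤ s → s ≤ n-1 → window n (j+s) ∈ G.edgeSet) :
    G = stripTails n k j := by
  apply SimpleGraph.edgeSet_inj.mp
  rw [stripTails, edgeSet_deleteEdges]
  have hES : ∀ i : ℤ, window n i ∈ escapeRoute n k j ↔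
      ((n:ℤ) ∣ j - i ∨ (n:ℤ) ∣ (j + m) - i) := by
    intro i; rw [window_mem_ES hn, show j + 2*k + 1 = j + m by omega]
  have hESf : ∀ i : ℤ, frame n i ∈ escapeRoute n k j ↔
      ∃ i', (j + 1 ≤ i' ∧ i' ≤ j + m) ∧ (n:ℤ) ∣ i' - i := by
    intro i; rw [frame_mem_ES hn, show j + 2*k + 1 = j + m by omega]
  ext e
  constructor
  · intro he
    have hsc : e ∈ (squareCycle n).edgeSet := SimpleGraph.edgeSet_mono hle he
    refine ⟨hsc, ?_⟩
    obtain ⟨i, hi | hi⟩ := sc_edge_classify hn hsc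
    · subst hi
      obtain ⟨r, hr0, hr1, hdr⟩ := rep_mod hn i j
      have heG : frame n (j + r) ∈ G.edgeSet := by
        rw [← frame_congr (show (n:ℤ) ∣ i - (j + r) by
          rwa [show i - (j + r) = (i - j) - r by ring])]
        exact he
      intro hES'
      obtain ⟨i', ⟨hi1, hi2⟩, hdvd⟩ := (hESf i).mp hES'
      have hd2 : (n:ℤ) ∣ (i' - j) - r := by
        have := dvd_add hdvd hdr
        rwa [show (i' - i) + ((i - j) - r) = (i' - j) - r by ring] at this
      rcases eq_or_lt_of_le (show (i' - j) - r ≤ n by omega) with hcase | hcase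
      · -- i' - j = n, m = n, r = 0
        have hrm : i' - j = n + r := by omega
        have hr0' : r = 0 := by omega
        have hmn' : m = n := by omega
        refine hA0 n (by omega) (by omega) ?_
        rw [← frame_congr (show (n:ℤ) ∣ (j + n) - (j + r) by
          rw [show (j + (n:ℤ)) - (j + r) = n - r by ring, hr0']; simp)] at heG
        exact heG
      · have : (i' - j) - r = 0 := dvd_small hd2 (by omega) hcase
        exact hA0 r (by omega) (by omega) (by rwa [show j + r = j + (i' - j) by omega] at heG ⊢)
    · subst hi
      obtain ⟨r, hr0, hr1, hdr⟩ := rep_mod hn i j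
      have heG : window n (j + r) ∈ G.edgeSet := by
        rw [← window_congr (show (n:ℤ) ∣ i - (j + r) by
          rwa [show i - (j + r) = (i - j) - r by ring])]
        exact he
      intro hES'
      rcases (hES i).mp hES' with hd | hd
      · have : (n:ℤ) ∣ -r := by
          have := dvd_add hd hdr
          rwa [show (j - i) + ((i - j) - r) = -r by ring] at this
        have : r = 0 := by
          have := dvd_small (dvd_neg.mp this) (by omega) (by omega); omega
        exact hB0 (by rwa [this, add_zero] at heG)
      · have hd2 : (n:ℤ) ∣ m - r := by
          have := dvd_add hd hdr
          rwa [show ((j + m) - i) + ((i - j) - r) = m - r by ring] at this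
        rcases eq_or_lt_of_le (show m - r ≤ n by omega) with hcase | hcase
        · have : r = 0 ∧ m = n := by omega
          exact hB0 (by rwa [this.1, add_zero] at heG)
        · have : m - r = 0 := dvd_small hd2 (by omega) hcase
          exact hBm (by rwa [show r = m by omega] at heG)
  · rintro ⟨hsc, hES'⟩
    obtain ⟨i, hi | hi⟩ := sc_edge_classify hn hsc
    · subst hi
      obtain ⟨r, hr0, hr1, hdr⟩ := rep_mod hn i j
      have hcongr : frame n i = frame n (j + r) := frame_congr (by
        rwa [show i - (j + r) = (i - j) - r by ring])
      by_cases hr : 1 ≤ r ∧ r ≤ m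
      · exact absurd ((hESf i).mpr ⟨j + r, ⟨by omega, by omega⟩,
          dvd_flip (by rwa [show i - (j + r) = (i - j) - r by ring])⟩) hES'
      · rcases (show r = 0 ∨ (m + 1 ≤ r ∧ r ≤ n - 1) by omega) with hr' | hr'
        · by_cases hmn' : m = n
          · exact absurd ((hESf i).mpr ⟨j + n, ⟨by omega, by omega⟩, by
              have : (n:ℤ) ∣ (i - j) := by rwa [hr', sub_zero] at hdr
              rw [show (j + (n:ℤ)) - i = -((i - j) - n) by ring]
              exact dvd_neg.mpr (by
                exact dvd_sub this ⟨1, by ring⟩)⟩) hES'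
          · rw [hcongr, hr']
            rw [frame_congr (show (n:ℤ) ∣ (j + 0) - (j + n) by
              rw [show (j + (0:ℤ)) - (j + n) = -(n:ℤ) by ring]; exact dvd_neg.mpr ⟨1, by ring⟩)]
            exact hA1 n (by omega) (by omega)
        · rw [hcongr]
          exact hA1 r (by omega) (by omega)
    · subst hi
      obtain ⟨r, hr0, hr1, hdr⟩ := rep_mod hn i j
      have hcongr : window n i = window n (j + r) := window_congr (by
        rwa [show i - (j + r) = (i - j) - r by ring])
      have hrne0 : r ≠ 0 := by
        intro h
        have hdr0 : (n:ℤ) ∣ (i - j) := by rw [h] at hdr; simpa using hdr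
        exact hES' ((hES i).mpr (Or.inl (by
          rw [show j - i = -(i - j) by ring]; exact dvd_neg.mpr hdr0)))
      have hrnem : r ≠ m := by
        intro h
        have hdrm : (n:ℤ) ∣ (i - j) - m := by rw [h] at hdr; exact hdr
        exact hES' ((hES i).mpr (Or.inr (by
          rw [show (j + m) - i = -((i - j) - m) by ring]; exact dvd_neg.mpr hdrm)))
      rw [hcongr]
      rcases (show (1 ≤ r ∧ r ≤ m - 1) ∨ (m + 1 ≤ r ∧ r ≤ n - 1) by omega) with h | h
      · exact hB1 r h.1 h.2
      · exact hB2 r h.1 h.2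

end Final

section Cuts
variable {n : ℕ} (hn : 5 ≤ n) {G : SimpleGraph (ZMod n)}
  (hle : G ≤ squareCycle n) (hconn : G.Connected)

-- helper: t₀ = 0 against a T all of whose elements are in (0, n)
include hn in
lemma ht0_helper {T : Set ℤ} (hb : ∀ s ∈ T, 0 < s ∧ s < n) :
    ∀ s ∈ T, ¬ (n:ℤ) ∣ ((0:ℤ) - s) := by
  intro s hs hdvd
  have hb' := hb s hs
  have := dvd_small hdvd (by omega) (by omega)
  omega

include hn hle hconn in
lemma run_odd (j m : ℤ) (hm1 : 1 ≤ m) (hmn : m ≤ (n:ℤ) - 1)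
    (hA0 : ∀ s : ℤ, 1 ≤ s → s ≤ m → frame n (j+s) ∉ G.edgeSet)
    (hB0 : window n j ∉ G.edgeSet) (hBm : window n (j+m) ∉ G.edgeSet) :
    m % 2 = 1 := by
  by_contra hpar
  have hm2 : m % 2 = 0 := by omega
  set T : Set ℤ := {s | ∃ r : ℤ, 1 ≤ r ∧ s = 2*r ∧ s ≤ m} with hT
  refine cut_master hn hle hconn T j 2 ⟨1, by omega, by omega, by omega⟩ 0
    (ht0_helper hn (by rintro s ⟨r, h1, rfl, h3⟩; omega)) ?_ ?_ ?_ ?_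
  · rintro s ⟨r, h1, rfl, h3⟩ hmem
    exact absurd hmem (hA0 _ (by omega) (by omega))
  · rintro s ⟨r, h1, rfl, h3⟩ hmem
    rw [show j + 2*r - 1 = j + (2*r - 1) by ring] at hmem
    exact absurd hmem (hA0 _ (by omega) (by omega))
  · rintro s ⟨r, h1, rfl, h3⟩ hmem
    rcases eq_or_lt_of_le h3 with heq | hlt
    · exact absurd (by rwa [heq] at hmem) hBm
    · exact ⟨2*r + 2, ⟨r + 1, by omega, by omega, by omega⟩, by simp [show 2*r + 2 - (2*r+2) = 0 by ring]⟩
  · rintro s ⟨r, h1, rfl, h3⟩ hmem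
    rcases eq_or_lt_of_le h1 with heq | hlt
    · exact absurd (by rwa [show j + 2*r - 2 = j by omega] at hmem) hB0
    · exact ⟨2*r - 2, ⟨r - 1, by omega, by omega, by omega⟩, by simp⟩

include hn hle hconn in
lemma interior_window (j m : ℤ) (hm1 : 1 ≤ m) (hmn : m ≤ (n:ℤ) - 1) (hmo : m % 2 = 1)
    (hA0 : ∀ s : ℤ, 1 ≤ s → s ≤ m → frame n (j+s) ∉ G.edgeSet)
    (hB0 : window n j ∉ G.edgeSet) (hBm : window n (j+m) ∉ G.edgeSet)
    (s₀ : ℤ) (hs1 : 1 ≤ s₀) (hs2 : s₀ ≤ m - 1)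
    (hmiss : window n (j+s₀) ∉ G.edgeSet) : False := by
  rcases Int.even_or_odd s₀ with ⟨l, hl⟩ | ⟨l, hl⟩
  · -- s₀ even : chain {2,4,…,s₀}
    set T : Set ℤ := {s | ∃ r : ℤ, 1 ≤ r ∧ s = 2*r ∧ s ≤ s₀} with hT
    refine cut_master hn hle hconn T j 2 ⟨1, by omega, by omega, by omega⟩ 0
      (ht0_helper hn (by rintro s ⟨r, h1, rfl, h3⟩; omega)) ?_ ?_ ?_ ?_
    · rintro s ⟨r, h1, rfl, h3⟩ hmem
      exact absurd hmem (hA0 _ (by omega) (by omega))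
    · rintro s ⟨r, h1, rfl, h3⟩ hmem
      rw [show j + 2*r - 1 = j + (2*r - 1) by ring] at hmem
      exact absurd hmem (hA0 _ (by omega) (by omega))
    · rintro s ⟨r, h1, rfl, h3⟩ hmem
      rcases eq_or_lt_of_le h3 with heq | hlt
      · exact absurd (by rwa [heq] at hmem) hmiss
      · exact ⟨2*r + 2, ⟨r + 1, by omega, by omega, by omega⟩, by simp⟩
    · rintro s ⟨r, h1, rfl, h3⟩ hmem
      rcases eq_or_lt_of_le h1 with heq | hlt
      · exact absurd (by rwa [show j + 2*r - 2 = j by omega] at hmem) hB0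
      · exact ⟨2*r - 2, ⟨r - 1, by omega, by omega, by omega⟩, by simp⟩
  · -- s₀ odd : chain {s₀+2, s₀+4, …, m}
    set T : Set ℤ := {s | ∃ r : ℤ, 1 ≤ r ∧ s = s₀ + 2*r ∧ s ≤ m} with hT
    refine cut_master hn hle hconn T j (s₀ + 2) ⟨1, by omega, by omega, by omega⟩ 0
      (ht0_helper hn (by rintro s ⟨r, h1, rfl, h3⟩; omega)) ?_ ?_ ?_ ?_
    · rintro s ⟨r, h1, rfl, h3⟩ hmem
      exact absurd hmem (hA0 _ (by omega) (by omega))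
    · rintro s ⟨r, h1, rfl, h3⟩ hmem
      rw [show j + (s₀ + 2*r) - 1 = j + (s₀ + 2*r - 1) by ring] at hmem
      exact absurd hmem (hA0 _ (by omega) (by omega))
    · rintro s ⟨r, h1, rfl, h3⟩ hmem
      have : s₀ + 2*r = m ∨ s₀ + 2*r + 2 ≤ m := by omega
      rcases this with heq | hlt
      · exact absurd (by rwa [heq] at hmem) hBm
      · exact ⟨s₀ + 2*r + 2, ⟨r + 1, by omega, by omega, by omega⟩, by simp⟩
    · rintro s ⟨r, h1, rfl, h3⟩ hmem
      rcases eq_or_lt_of_le h1 with heq | hlt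
      · exact absurd (by rwa [show j + (s₀ + 2*r) - 2 = j + s₀ by omega] at hmem) hmiss
      · exact ⟨s₀ + 2*r - 2, ⟨r - 1, by omega, by omega, by omega⟩, by simp⟩

include hn hle hconn in
lemma single_run (j m s₂ m₂ : ℤ) (hm1 : 1 ≤ m) (hmo : m % 2 = 1)
    (hs₂ : m + 2 ≤ s₂) (hm₂1 : 1 ≤ m₂) (hm₂o : m₂ % 2 = 1) (hub : s₂ + m₂ ≤ n)
    (hA0 : ∀ s : ℤ, 1 ≤ s → s ≤ m → frame n (j+s) ∉ G.edgeSet)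
    (hA2 : ∀ s : ℤ, s₂ ≤ s → s ≤ s₂ + m₂ - 1 → frame n (j+s) ∉ G.edgeSet)
    (hB0 : window n j ∉ G.edgeSet) (hBm : window n (j+m) ∉ G.edgeSet)
    (hB2a : window n (j + (s₂ - 1)) ∉ G.edgeSet)
    (hB2b : window n (j + (s₂ + m₂ - 1)) ∉ G.edgeSet) : False := by
  set T : Set ℤ := {s | (m + 1 ≤ s ∧ s ≤ s₂) ∨
      (∃ r : ℤ, 1 ≤ r ∧ s = 2*r ∧ s ≤ m - 1) ∨
      (∃ r : ℤ, 1 ≤ r ∧ s = s₂ + 2*r ∧ s ≤ s₂ + m₂ - 1)} with hT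
  have hbnd : ∀ s ∈ T, 0 < s ∧ s < n := by
    rintro s (⟨h1, h2⟩ | ⟨r, h1, rfl, h3⟩ | ⟨r, h1, rfl, h3⟩) <;> omega
  refine cut_master hn hle hconn T j (m+1) (Or.inl ⟨by omega, by omega⟩) 0
    (ht0_helper hn hbnd) ?_ ?_ ?_ ?_
  · -- frames upward: s → s+1
    rintro s (⟨h1, h2⟩ | ⟨r, h1, rfl, h3⟩ | ⟨r, h1, rfl, h3⟩) hmem
    · rcases eq_or_lt_of_le h2 with heq | hlt
      · exact absurd (by rwa [show j + s = j + s₂ by omega] at hmem) (hA2 s₂ (by omega) (by omega))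
      · exact ⟨s + 1, Or.inl ⟨by omega, by omega⟩, by simp⟩
    · exact absurd hmem (hA0 _ (by omega) (by omega))
    · exact absurd hmem (hA2 _ (by omega) (by omega))
  · -- frames downward: s → s-1
    rintro s (⟨h1, h2⟩ | ⟨r, h1, rfl, h3⟩ | ⟨r, h1, rfl, h3⟩) hmem
    · rcases eq_or_lt_of_le h1 with heq | hlt
      · rw [show j + s - 1 = j + (s - 1) by ring] at hmem
        exact absurd hmem (hA0 _ (by omega) (by omega))
      · exact ⟨s - 1, Or.inl ⟨by omega, by omega⟩, by simp⟩
    · rw [show j + 2*r - 1 = j + (2*r - 1) by ring] at hmem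
      exact absurd hmem (hA0 _ (by omega) (by omega))
    · rw [show j + (s₂ + 2*r) - 1 = j + (s₂ + 2*r - 1) by ring] at hmem
      exact absurd hmem (hA2 _ (by omega) (by omega))
  · -- windows upward: s → s+2
    rintro s (⟨h1, h2⟩ | ⟨r, h1, rfl, h3⟩ | ⟨r, h1, rfl, h3⟩) hmem
    · have : s ≤ s₂ - 2 ∨ s = s₂ - 1 ∨ s = s₂ := by omega
      rcases this with hlt | heq | heq
      · exact ⟨s + 2, Or.inl ⟨by omega, by omega⟩, by simp⟩
      · exact absurd (by rwa [show j + s = j + (s₂ - 1) by omega] at hmem) hB2a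
      · -- s = s₂ : either m₂ = 1 (window absent) or s₂+2 in run2 chain
        rcases eq_or_lt_of_le hm₂1 with h1' | h1'
        · exact absurd (by rwa [show j + s = j + (s₂ + m₂ - 1) by omega] at hmem) hB2b
        · exact ⟨s + 2, Or.inr (Or.inr ⟨1, by omega, by omega, by omega⟩), by simp⟩
    · have : 2*r + 2 ≤ m - 1 ∨ 2*r = m - 1 := by omega
      rcases this with hlt | heq
      · exact ⟨2*r + 2, Or.inr (Or.inl ⟨r+1, by omega, by omega, by omega⟩), by simp⟩
      · exact ⟨2*r + 2, Or.inl ⟨by omega, by omega⟩, by simp⟩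
    · have : s₂ + 2*r + 2 ≤ s₂ + m₂ - 1 ∨ s₂ + 2*r = s₂ + m₂ - 1 := by omega
      rcases this with hlt | heq
      · exact ⟨s₂ + 2*r + 2, Or.inr (Or.inr ⟨r+1, by omega, by omega, by omega⟩), by simp⟩
      · exact absurd (by rwa [show j + (s₂ + 2*r) = j + (s₂ + m₂ - 1) by omega] at hmem) hB2b
  · -- windows downward: s → s-2
    rintro s (⟨h1, h2⟩ | ⟨r, h1, rfl, h3⟩ | ⟨r, h1, rfl, h3⟩) hmem
    · have : m + 3 ≤ s ∨ s = m + 2 ∨ s = m + 1 := by omega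
      rcases this with hlt | heq | heq
      · exact ⟨s - 2, Or.inl ⟨by omega, by omega⟩, by simp⟩
      · exact absurd (by rwa [show j + s - 2 = j + m by omega] at hmem) hBm
      · -- s = m+1 : s - 2 = m - 1 ; if m = 1 this is j (window absent), else even chain
        rcases eq_or_lt_of_le hm1 with h1' | h1'
        · exact absurd (by rwa [show j + s - 2 = j by omega] at hmem) hB0
        · exact ⟨s - 2, Or.inr (Or.inl ⟨(m-1)/2, by omega, by omega, by omega⟩), by simp⟩
    · rcases eq_or_lt_of_le h1 with heq | hlt
      · exact absurd (by rwa [show j + 2*r - 2 = j by omega] at hmem) hB0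
      · exact ⟨2*r - 2, Or.inr (Or.inl ⟨r-1, by omega, by omega, by omega⟩), by simp⟩
    · rcases eq_or_lt_of_le h1 with heq | hlt
      · exact ⟨s₂ + 2*r - 2, Or.inl ⟨by omega, by omega⟩, by simp⟩
      · exact ⟨s₂ + 2*r - 2, Or.inr (Or.inr ⟨r-1, by omega, by omega, by omega⟩), by simp⟩

end Cuts

section CaseII
variable {n : ℕ} (hn : 5 ≤ n) {G : SimpleGraph (ZMod n)}
  (hle : G ≤ squareCycle n) (hconn : G.Connected)

include hn hle hconn in
lemma even_impossible (heven : n % 2 = 0)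
    (hA : ∀ i : ℤ, frame n i ∉ G.edgeSet) : False := by
  set T : Set ℤ := {s | ∃ t : ℤ, s = 2*t} with hT
  have h2n : (2:ℤ) ∣ (n:ℤ) := ⟨n/2, by omega⟩
  refine cut_master hn hle hconn T 0 0 ⟨0, by omega⟩ 1 ?_ ?_ ?_ ?_ ?_
  · rintro s ⟨t, rfl⟩ hdvd
    have := dvd_trans h2n hdvd
    omega
  · rintro s ⟨t, rfl⟩ hmem; exact absurd hmem (hA _)
  · rintro s ⟨t, rfl⟩ hmem; exact absurd hmem (hA _)
  · rintro s ⟨t, rfl⟩ _; exact ⟨2*t + 2, ⟨t+1, by ring⟩, by simp⟩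
  · rintro s ⟨t, rfl⟩ _; exact ⟨2*t - 2, ⟨t-1, by ring⟩, by simp⟩

include hn hle hconn in
lemma two_missing_windows (hodd : n % 2 = 1)
    (hA : ∀ i : ℤ, frame n i ∉ G.edgeSet)
    (i0 i1 : ℤ) (h0 : window n i0 ∉ G.edgeSet) (h1 : window n i1 ∉ G.edgeSet)
    (hne : ¬ (n:ℤ) ∣ i1 - i0) : False := by
  set u : ℤ := ((n:ℤ)+1)/2 with hu
  have h2u : 2*u = (n:ℤ)+1 := by omega
  set d : ℤ := (u * (i1 - i0)) % n with hd
  have hd0 : 0 ≤ d := Int.emod_nonneg _ (by omega)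
  have hd1 : d < n := Int.emod_lt_of_pos _ (by omega)
  have e1 : (n:ℤ) ∣ (u*(i1-i0) - d) := ⟨(u*(i1-i0))/n, by rw [hd, Int.emod_def]; ring⟩
  have hdvd : (n:ℤ) ∣ (i0 + 2*d - i1) := by
    have key : i0 + 2*d - i1 = (i1 - i0)*n - 2*(u*(i1-i0) - d) := by linear_combination (i1 - i0) * h2u
    rw [key]
    exact dvd_sub ⟨i1 - i0, mul_comm _ _⟩ (Dvd.dvd.mul_left e1 2)
  have hdne : d ≠ 0 := by
    intro h
    rw [h] at hdvd
    simp only [mul_zero, add_zero] at hdvd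
    exact hne (by
      have := (dvd_neg.mpr hdvd)
      rwa [neg_sub] at this)
  set T : Set ℤ := {s | ∃ t : ℤ, 1 ≤ t ∧ t ≤ d ∧ s = 2*t} with hT
  refine cut_master hn hle hconn T i0 2 ⟨1, by omega, by omega, by omega⟩ 0 ?_ ?_ ?_ ?_ ?_
  · rintro s ⟨t, ht1, ht2, rfl⟩ hdvd'
    have : (n:ℤ) ∣ 2*t := by
      rw [zero_sub] at hdvd'
      exact dvd_neg.mp hdvd'
    obtain ⟨c, hc⟩ := this
    have hc1 : c = 1 := by nlinarith
    rw [hc1, mul_one] at hc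
    omega
  · rintro s ⟨t, ht1, ht2, rfl⟩ hmem; exact absurd hmem (hA _)
  · rintro s ⟨t, ht1, ht2, rfl⟩ hmem; exact absurd hmem (hA _)
  · rintro s ⟨t, ht1, ht2, rfl⟩ hmem
    rcases eq_or_lt_of_le ht2 with heq | hlt
    · exfalso
      refine h1 ?_
      rw [← window_congr (show (n:ℤ) ∣ (i0 + 2*t) - i1 by rw [heq]; exact hdvd)]
      exact hmem
    · exact ⟨2*t + 2, ⟨t+1, by omega, by omega, by ring⟩, by simp⟩
  · rintro s ⟨t, ht1, ht2, rfl⟩ hmem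
    rcases eq_or_lt_of_le ht1 with heq | hlt
    · exact absurd (by rwa [show i0 + 2*t - 2 = i0 by omega] at hmem) h0
    · exact ⟨2*t - 2, ⟨t-1, by omega, by omega, by ring⟩, by simp⟩

end CaseII

lemma ceil_bound {n : ℕ} (hn : 5 ≤ n) {k : ℤ} (h : 2*k < n) : k ≤ ⌈((n:ℚ) - 2)/2⌉ := by
  have h1 : ((k - 1 : ℤ) : ℚ) < ((n:ℚ) - 2)/2 := by
    push_cast
    have : (2*k : ℚ) < n := by exact_mod_cast h
    linarith
  have := Int.lt_ceil.mpr h1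
  omega

/-- Every nontrivial connected spanning convex subgraph of `C_n^2` is a strip graph
with tails `S_{n,k,j}` with `0 ≤ j ≤ n - 1` and `0 ≤ k ≤ ⌈(n-2)/2⌉`. -/
theorem convex_subgraph_eq_stripTails (n : ℕ) (hn : 5 ≤ n)
    (G : SimpleGraph (ZMod n)) (hle : G ≤ squareCycle n)
    (hconn : G.Connected) (hconv : IsConvex n G) (hnt : ¬ IsTrivialSub n G) :
    ∃ j k : ℤ, 0 ≤ j ∧ j ≤ (n : ℤ) - 1 ∧ 0 ≤ k ∧ k ≤ ⌈((n : ℚ) - 2) / 2⌉ ∧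
      G = stripTails n k j := by

  classical
  rw [IsTrivialSub, not_or] at hnt
  obtain ⟨hnt1, hnt2⟩ := hnt
  by_cases hallA : ∀ i : ℤ, frame n i ∈ G.edgeSet
  · exact absurd (SimpleGraph.edgeSet_inj.mp (Set.Subset.antisymm
      (SimpleGraph.edgeSet_mono hle) (by
        intro e he
        obtain ⟨i, rfl | rfl⟩ := sc_edge_classify hn he
        · exact hallA i
        · exact conv1 hn hconv (hallA i) (hallA (i+1))))) hnt1
  obtain ⟨iA, hiA⟩ := not_forall.mp hallA
  by_cases hnoA : ∀ i : ℤ, frame n i ∉ G.edgeSet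
  · -- Case II : no frames at all
    have hodd : n % 2 = 1 := by
      rcases Nat.even_or_odd n with he | ho
      · exact absurd (even_impossible hn hle hconn (Nat.even_iff.mp he) hnoA) not_false
      · exact Nat.odd_iff.mp ho
    by_cases hallB : ∀ i : ℤ, window n i ∈ G.edgeSet
    · exfalso
      apply hnt2
      refine ⟨Nat.odd_iff.mpr hodd, Set.Subset.antisymm ?_ ?_⟩
      · intro e he
        obtain ⟨i, rfl | rfl⟩ := sc_edge_classify hn (SimpleGraph.edgeSet_mono hle he)
        · exact absurd he (hnoA i)
        · exact ⟨i, rfl⟩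
      · rintro e ⟨i, rfl⟩; exact hallB i
    · obtain ⟨i0, hi0⟩ := not_forall.mp hallB
      have huniq : ∀ i : ℤ, window n i ∉ G.edgeSet → (n:ℤ) ∣ i - i0 := by
        intro i hi
        by_contra hnd
        exact two_missing_windows hn hle hconn hodd hnoA i0 i hi0 hi hnd
      have hjdvd : (n:ℤ) ∣ (i0 % n) - i0 := ⟨-(i0/(n:ℤ)), by rw [Int.emod_def]; ring⟩
      refine ⟨i0 % n, ((n:ℤ)-1)/2, Int.emod_nonneg _ (by omega),
        (by have := Int.emod_lt_of_pos i0 (show (0:ℤ) < n by omega); omega),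
        by omega, ceil_bound hn (by omega), ?_⟩
      refine final_eq hn hle (i0 % n) n (((n:ℤ)-1)/2) (by omega) (by omega) le_rfl
        (fun s _ _ => hnoA _) (fun s hs1 hs2 => absurd hs2 (by omega)) ?_ ?_ ?_
        (fun s hs1 hs2 => absurd hs2 (by omega))
      · rw [window_congr hjdvd]; exact hi0
      · rw [window_congr (show (n:ℤ) ∣ (i0 % n + n) - i0 by
          have := dvd_add hjdvd (dvd_refl (n:ℤ))
          rwa [show (i0 % n - i0) + n = (i0 % n + n) - i0 by ring] at this)]
        exact hi0
      · intro s hs1 hs2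
        by_contra hmiss
        have h1 := huniq _ hmiss
        have h2 : (n:ℤ) ∣ s := by
          have := dvd_sub h1 hjdvd
          rwa [show ((i0 % n + s) - i0) - (i0 % n - i0) = s by ring] at this
        have := dvd_small h2 (by omega) (by omega)
        omega
  · -- Case III : some frame present, some missing
    obtain ⟨iB, hiB'⟩ := not_forall.mp hnoA
    have hiB : frame n iB ∈ G.edgeSet := not_not.mp hiB'
    -- find a boundary j with frame j present, frame (j+1) absent
    have hex : ∃ t : ℕ, frame n (iB + t) ∉ G.edgeSet := by
      obtain ⟨r, hr0, hr1, hdr⟩ := rep_mod hn iA iB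
      refine ⟨r.toNat, ?_⟩
      rw [show (iB + (r.toNat : ℤ)) = iB + r by omega]
      rw [frame_congr (show (n:ℤ) ∣ (iB + r) - iA by
        have := dvd_neg.mpr hdr
        rwa [show -((iA - iB) - r) = (iB + r) - iA by ring] at this)]
      exact hiA
    set t₁ := Nat.find hex with ht₁def
    have ht₁spec : frame n (iB + t₁) ∉ G.edgeSet := Nat.find_spec hex
    have ht₁pos : 1 ≤ t₁ := by
      rcases Nat.eq_zero_or_pos t₁ with h | h
      · exfalso; apply ht₁spec; rw [h]; simpa using hiB
      · exact h
    have hprev : frame n (iB + t₁ - 1) ∈ G.edgeSet := by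
      have hmin := Nat.find_min hex (show t₁ - 1 < t₁ by omega)
      rw [not_not] at hmin
      rwa [show (iB + ((t₁ - 1 : ℕ) : ℤ)) = iB + t₁ - 1 by omega] at hmin
    set j : ℤ := (iB + t₁ - 1) % n with hjdef
    have hj0 : 0 ≤ j := Int.emod_nonneg _ (by omega)
    have hj1 : j ≤ (n:ℤ) - 1 := by
      have := Int.emod_lt_of_pos (iB + t₁ - 1) (show (0:ℤ) < n by omega); omega
    have hjd : (n:ℤ) ∣ j - (iB + t₁ - 1) :=
      ⟨-((iB + t₁ - 1)/(n:ℤ)), by rw [hjdef, Int.emod_def]; ring⟩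
    have hAj : frame n j ∈ G.edgeSet := by rw [frame_congr hjd]; exact hprev
    have hAj1 : frame n (j + 1) ∉ G.edgeSet := by
      rw [frame_congr (show (n:ℤ) ∣ (j+1) - (iB + t₁) by
        rwa [show (j+1) - (iB + (t₁:ℤ)) = j - (iB + t₁ - 1) by ring])]
      exact ht₁spec
    -- minimal run length m
    have hwitm : 1 ≤ n - 1 ∧ frame n (j + ((n-1:ℕ):ℤ) + 1) ∈ G.edgeSet := by
      refine ⟨by omega, ?_⟩
      rw [frame_congr (show (n:ℤ) ∣ (j + ((n-1:ℕ):ℤ) + 1) - j by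
        rw [show (j + ((n-1:ℕ):ℤ) + 1) - j = (n:ℤ) by omega])]
      exact hAj
    have hexm : ∃ t : ℕ, 1 ≤ t ∧ frame n (j + t + 1) ∈ G.edgeSet := ⟨n-1, hwitm⟩
    set m₀ := Nat.find hexm with hm₀def
    have hm₀spec := Nat.find_spec hexm
    set m : ℤ := (m₀ : ℤ) with hmdef
    have hm1 : 1 ≤ m := by rw [hmdef, hm₀def]; exact_mod_cast hm₀spec.1
    have hmub : m ≤ (n:ℤ) - 1 := by
      have := Nat.find_le (h := hexm) hwitm
      omega
    have hmem : frame n (j + m + 1) ∈ G.edgeSet := hm₀spec.2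
    have hrun : ∀ s : ℤ, 1 ≤ s → s ≤ m → frame n (j + s) ∉ G.edgeSet := by
      intro s hs1 hs2
      rcases eq_or_lt_of_le hs1 with heq | hlt
      · rw [← heq]; exact hAj1
      · have hmin := Nat.find_min hexm (show (s-1).toNat < m₀ by omega)
        intro hmem'
        apply hmin
        refine ⟨by omega, ?_⟩
        rw [show (j + (((s-1).toNat:ℕ):ℤ) + 1) = j + s by omega]
        exact hmem'
    have hB0 : window n j ∉ G.edgeSet := fun h => hAj1 (conv2 hn hconv hAj h)
    have hBm : window n (j + m) ∉ G.edgeSet := by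
      intro h
      exact hrun m hm1 le_rfl (conv3 hn hconv hmem h)
    have hmo : m % 2 = 1 := run_odd hn hle hconn j m hm1 hmub hrun hB0 hBm
    -- single run
    have hA1 : ∀ s : ℤ, m + 1 ≤ s → s ≤ n → frame n (j + s) ∈ G.edgeSet := by
      by_contra hcon
      push_neg at hcon
      obtain ⟨s', hs1', hs2', hmiss⟩ := hcon
      have hs'n : s' ≠ n := by
        intro h
        apply hmiss
        rw [h, frame_congr (show (n:ℤ) ∣ (j + (n:ℤ)) - j by
          rw [show (j + (n:ℤ)) - j = (n:ℤ) by ring])]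
        exact hAj
      have hs'm1 : s' ≠ m + 1 := by
        intro h
        apply hmiss
        rw [h, show j + (m+1) = j + m + 1 by ring]
        exact hmem
      have hwits : frame n (j + (m + 1 + (((s' - (m+1)).toNat:ℕ):ℤ))) ∉ G.edgeSet := by
        rw [show j + (m + 1 + (((s' - (m+1)).toNat:ℕ):ℤ)) = j + s' by omega]
        exact hmiss
      have hexs : ∃ t : ℕ, frame n (j + (m + 1 + (t:ℤ))) ∉ G.edgeSet := ⟨_, hwits⟩
      set t₂ := Nat.find hexs with ht₂def
      have ht₂spec : frame n (j + (m + 1 + (t₂:ℤ))) ∉ G.edgeSet := Nat.find_spec hexs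
      have ht₂le : t₂ ≤ (s' - (m+1)).toNat := Nat.find_le (h := hexs) hwits
      have ht₂pos : 1 ≤ t₂ := by
        rcases Nat.eq_zero_or_pos t₂ with h | h
        · exfalso
          apply ht₂spec
          rw [h, show j + (m + 1 + (((0:ℕ):ℕ):ℤ)) = j + m + 1 by push_cast; ring]
          exact hmem
        · exact h
      set s₂ : ℤ := m + 1 + (t₂:ℤ) with hs₂def
      have hs₂ub : s₂ ≤ (n:ℤ) - 1 := by omega
      have hs₂2 : m + 2 ≤ s₂ := by omega
      have hAbefore : frame n (j + (s₂ - 1)) ∈ G.edgeSet := by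
        have hmin := Nat.find_min hexs (show t₂ - 1 < t₂ by omega)
        rw [not_not] at hmin
        rwa [show j + (m + 1 + (((t₂ - 1:ℕ):ℕ):ℤ)) = j + (s₂ - 1) by omega] at hmin
      have hwit2 : 1 ≤ ((n:ℤ) - s₂).toNat ∧
          frame n (j + s₂ + ((((n:ℤ) - s₂).toNat:ℕ):ℤ)) ∈ G.edgeSet := by
        refine ⟨by omega, ?_⟩
        rw [frame_congr (show (n:ℤ) ∣ (j + s₂ + ((((n:ℤ) - s₂).toNat:ℕ):ℤ)) - j by
          rw [show (j + s₂ + ((((n:ℤ) - s₂).toNat:ℕ):ℤ)) - j = (n:ℤ) by omega])]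
        exact hAj
      have hexm2 : ∃ t : ℕ, 1 ≤ t ∧ frame n (j + s₂ + (t:ℤ)) ∈ G.edgeSet := ⟨_, hwit2⟩
      set m₂₀ := Nat.find hexm2 with hm₂₀def
      have hm₂spec := Nat.find_spec hexm2
      set m₂ : ℤ := (m₂₀ : ℤ) with hm₂def
      have hm₂1 : 1 ≤ m₂ := by omega
      have hm₂ub : s₂ + m₂ ≤ (n:ℤ) := by
        have := Nat.find_le (h := hexm2) hwit2
        omega
      have hmem2 : frame n (j + s₂ + m₂) ∈ G.edgeSet := hm₂spec.2
      have hrun2 : ∀ s : ℤ, s₂ ≤ s → s ≤ s₂ + m₂ - 1 → frame n (j + s) ∉ G.edgeSet := by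
        intro s hsa hsb
        rcases eq_or_lt_of_le hsa with heq | hlt
        · rw [← heq]; exact ht₂spec
        · have hmin := Nat.find_min hexm2 (show (s - s₂).toNat < m₂₀ by omega)
          intro hmem'
          apply hmin
          refine ⟨by omega, ?_⟩
          rw [show j + s₂ + ((((s - s₂).toNat:ℕ)):ℤ) = j + s by omega]
          exact hmem'
      have hB2a : window n (j + (s₂ - 1)) ∉ G.edgeSet := by
        intro h
        have hstep := conv2 hn hconv hAbefore h
        exact hrun2 s₂ le_rfl (by omega)
          (by rw [show j + s₂ = (j + (s₂ - 1)) + 1 by ring]; exact hstep)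
      have hB2b : window n (j + (s₂ + m₂ - 1)) ∉ G.edgeSet := by
        intro h
        have hfr : frame n ((j + (s₂ + m₂ - 1)) + 1) ∈ G.edgeSet := by
          rw [show (j + (s₂ + m₂ - 1)) + 1 = j + s₂ + m₂ by ring]
          exact hmem2
        exact hrun2 _ (by omega) (by omega) (conv3 hn hconv hfr h)
      have hm₂o : m₂ % 2 = 1 := by
        refine run_odd hn hle hconn (j + (s₂ - 1)) m₂ hm₂1 (by omega) ?_ hB2a ?_
        · intro s hsa hsb hmem'
          apply hrun2 (s₂ - 1 + s) (by omega) (by omega)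
          rw [show j + (s₂ - 1 + s) = j + (s₂ - 1) + s by ring]
          exact hmem'
        · rw [show j + (s₂ - 1) + m₂ = j + (s₂ + m₂ - 1) by ring]
          exact hB2b
      exact single_run hn hle hconn j m s₂ m₂ hm1 hmo hs₂2 hm₂1 hm₂o hm₂ub
        hrun hrun2 hB0 hBm hB2a hB2b
    -- interior & exterior windows
    have hB1 : ∀ s : ℤ, 1 ≤ s → s ≤ m - 1 → window n (j + s) ∈ G.edgeSet := by
      intro s h1 h2
      by_contra hmiss
      exact interior_window hn hle hconn j m hm1 hmub hmo hrun hB0 hBm s h1 h2 hmiss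
    have hB2 : ∀ s : ℤ, m + 1 ≤ s → s ≤ (n:ℤ) - 1 → window n (j + s) ∈ G.edgeSet := by
      intro s h1 h2
      have f1 : frame n (j + s) ∈ G.edgeSet := hA1 s h1 (by omega)
      have f2 : frame n ((j + s) + 1) ∈ G.edgeSet := by
        rw [show (j + s) + 1 = j + (s + 1) by ring]
        exact hA1 (s+1) (by omega) (by omega)
      exact conv1 hn hconv f1 f2
    exact ⟨j, (m-1)/2, hj0, hj1, by omega, ceil_bound hn (by omega),
      final_eq hn hle j m ((m-1)/2) (by omega) hm1 (by omega) hrun hA1 hB0 hBm hB1 hB2⟩
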